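/- Let k be a field, let B and C be Hopf algebras over k with bijective antipodes (both denoted S), let ρ : B → C be a Hopf algebra homomorphism, and let l be an odd integer. Let M be a k-vector space with a right B-module structure (m,b) ↦ m·b and a coassociative counital right C-comodule structure δ(m) = m_0 ⊗ m_1 satisfying δ(m·b) = m_0·b_(2) ⊗ S(ρ(b_(1))) m_1 ρ(b_(3)) for all m ∈ M, b ∈ B. Define b·m := m·S^{-l}(b) and δ'(m) := S^l(m_1) ⊗ m_0. Then these formulas make M a left B-module and a coassociative counital left C-comodule, and they satisfy the left relative Yetter-Drinfeld condition: δ'(b·m) = ρ(b_(1)) m'_{-1} ρ(S(b_(3))) ⊗ b_(2)·m'_0 for all b ∈ B and m ∈ M, where δ'(m) = m'_{-1} ⊗ m'_0. -/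

import Mathlib

/-
Odd powers of the antipode are bialgebra anti-automorphisms: `S` is one (it reverses the
comultiplication because `Δ ∘ S` and `(S ⊗ S) ∘ τ ∘ Δ` are both convolution inverses of
`Δ`), so `S²` is a bialgebra automorphism and `S^(2k+1) = (S²)^k S`. Anti-multiplicativity of
`S^{-l}` turns the right action into a left one, and anti-comultiplicativity and counitality of
`S^l` turn the flipped right coaction into a left one. For the Yetter–Drinfeld condition,
`S^{-l}` reverses the iterated coproduct of `b`, so the right condition applied to
`m · S^{-l}(b)` has its Sweedler legs in reversed order; the anti-multiplicative `S^l` restores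
the order, and `S^l ∘ ρ ∘ S^{-l} = ρ` because `ρ` commutes with the antipodes.
-/

open TensorProduct

section

variable (k : Type*) [Field k] (B C M : Type*)
  [Ring B] [HopfAlgebra k B] [Ring C] [HopfAlgebra k C]
  [AddCommGroup M] [Module k M]

/-- The left `B`-action `b·m := m · S^{-l}(b)` obtained from a right `B`-action
`μM` (here `eB` is the antipode of `B` as a linear automorphism, and `l : ℤ`). -/
noncomputable def SlAct (eB : B ≃ₗ[k] B) (l : ℤ) (μM : M →ₗ[k] B →ₗ[k] M)
    (b : B) (m : M) : M :=
  μM m ((eB ^ (-l)) b)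

/-- The left `C`-coaction `δ'(m) := S^l(m₍₁₎) ⊗ m₍₀₎` obtained from a right
`C`-coaction `δ` (here `eC` is the antipode of `C` as a linear automorphism). -/
noncomputable def SlCoact (eC : C ≃ₗ[k] C) (l : ℤ) (δ : M →ₗ[k] M ⊗[k] C) :
    M →ₗ[k] C ⊗[k] M :=
  (TensorProduct.map (eC ^ l).toLinearMap LinearMap.id) ∘ₗ
    (TensorProduct.comm k M C).toLinearMap ∘ₗ δ

end

open Coalgebra HopfAlgebra WithConv LinearMap

theorem TensorProduct.exists_fin_sum_tmul {R M N : Type*} [CommSemiring R] [AddCommMonoid M]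
    [AddCommMonoid N] [Module R M] [Module R N] (x : M ⊗[R] N) :
    ∃ (n : ℕ) (f : Fin n → M) (g : Fin n → N), x = ∑ i, f i ⊗ₜ[R] g i := by
  obtain ⟨S, rfl⟩ := TensorProduct.exists_finset x
  refine ⟨S.card, fun i => (S.equivFin.symm i).1.1, fun i => (S.equivFin.symm i).1.2, ?_⟩
  rw [← S.sum_coe_sort]
  exact (Equiv.sum_comp S.equivFin.symm (fun p : S => p.1.1 ⊗ₜ[R] p.1.2)).symm

section ConvolutionInverse

variable {R A B : Type*} [CommSemiring R] [Semiring A] [HopfAlgebra R A] [Semiring B]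
  [Algebra R B]

theorem AlgHom.toConv_comp_antipode_mul (h : A →ₐ[R] B) :
    toConv (h.toLinearMap ∘ₗ antipode R) * toConv h.toLinearMap = 1 := by
  have := LinearMap.algHom_comp_convMul_distrib h (toConv (antipode R)) (toConv LinearMap.id)
  rw [LinearMap.antipode_mul_id] at this
  ext x
  simpa using congr($this x).symm

theorem AlgHom.toConv_mul_comp_antipode (h : A →ₐ[R] B) :
    toConv h.toLinearMap * toConv (h.toLinearMap ∘ₗ antipode R) = 1 := by
  have := LinearMap.algHom_comp_convMul_distrib h (toConv LinearMap.id) (toConv (antipode R))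
  rw [LinearMap.id_mul_antipode] at this
  ext x
  simpa using congr($this x).symm

end ConvolutionInverse

section Antipode

variable {R A : Type*} [CommSemiring R] [Semiring A] [HopfAlgebra R A]

theorem toConv_comul_eq_includeLeft_mul_includeRight :
    toConv (comul (R := R) (A := A)) =
      toConv (Algebra.TensorProduct.includeLeft : A →ₐ[R] A ⊗[R] A).toLinearMap *
      toConv (Algebra.TensorProduct.includeRight : A →ₐ[R] A ⊗[R] A).toLinearMap := by
  ext a
  rw [(ℛ R a).convMul_apply, ← (ℛ R a).eq]
  simp

theorem toConv_map_antipode_comm_comul_eq_mul :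
    toConv (map (antipode R) (antipode R) ∘ₗ (TensorProduct.comm R A A).toLinearMap ∘ₗ
      comul) =
      toConv ((Algebra.TensorProduct.includeRight : A →ₐ[R] A ⊗[R] A).toLinearMap ∘ₗ
        antipode R) *
      toConv ((Algebra.TensorProduct.includeLeft : A →ₐ[R] A ⊗[R] A).toLinearMap ∘ₗ
        antipode R) := by
  ext a
  rw [(ℛ R a).convMul_apply]
  simp [← (ℛ R a).eq]

/-- Both sides are convolution inverses of `comul`: with `comul = ι₁ * ι₂` and the right-hand
side equal to `(ι₂ ∘ S) * (ι₁ ∘ S)`, the product telescopes. -/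
theorem HopfAlgebra.comul_antipode (a : A) :
    comul (R := R) (antipode R a) =
      map (antipode R) (antipode R) (TensorProduct.comm R A A (comul a)) := by
  have hleft : toConv (map (antipode R) (antipode R) ∘ₗ
      (TensorProduct.comm R A A).toLinearMap ∘ₗ comul) *
      toConv (comul (R := R) (A := A)) = 1 := by
    rw [toConv_map_antipode_comm_comul_eq_mul, toConv_comul_eq_includeLeft_mul_includeRight]
    calc _ = toConv (Algebra.TensorProduct.includeRight.toLinearMap ∘ₗ antipode R) *
          ((toConv (Algebra.TensorProduct.includeLeft.toLinearMap ∘ₗ antipode R) *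
            toConv Algebra.TensorProduct.includeLeft.toLinearMap) *
          toConv (Algebra.TensorProduct.includeRight : A →ₐ[R] A ⊗[R] A).toLinearMap) := by
          simp only [mul_assoc]
      _ = 1 := by
          rw [AlgHom.toConv_comp_antipode_mul, one_mul, AlgHom.toConv_comp_antipode_mul]
  exact congr($(left_inv_eq_right_inv hleft LinearMap.comul_right_inv).ofConv a).symm

theorem BialgHom.map_antipode {C : Type*} [Semiring C] [HopfAlgebra R C] (ρ : A →ₐc[R] C)
    (a : A) : ρ (antipode R a) = antipode R (ρ a) := by
  have hleft : toConv (antipode R ∘ₗ (ρ : A →ₗc[R] C).toLinearMap) *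
      toConv (ρ : A →ₗc[R] C).toLinearMap = 1 := by
    have := LinearMap.convMul_comp_coalgHom_distrib (toConv (antipode R (A := C)))
      (toConv LinearMap.id) (ρ : A →ₗc[R] C)
    rw [LinearMap.antipode_mul_id] at this
    ext x
    simpa using congr($this x).symm
  exact congr($(left_inv_eq_right_inv hleft
    (AlgHom.toConv_mul_comp_antipode (ρ : A →ₐ[R] C))).ofConv a).symm

end Antipode

section BialgebraEndomorphism

variable {R A : Type*} [CommSemiring R] [Semiring A] [Bialgebra R A]

structure IsBialgEndomorphism (f : A →ₗ[R] A) : Prop where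
  map_one : f 1 = 1
  map_mul (x y : A) : f (x * y) = f x * f y
  counit_apply (x : A) : counit (R := R) (f x) = counit x
  comul_apply (x : A) : comul (R := R) (f x) = map f f (comul x)

structure IsBialgAntiEndomorphism (f : A →ₗ[R] A) : Prop where
  map_one : f 1 = 1
  map_mul (x y : A) : f (x * y) = f y * f x
  counit_apply (x : A) : counit (R := R) (f x) = counit x
  comul_apply (x : A) : comul (R := R) (f x) = map f f (TensorProduct.comm R A A (comul x))

namespace IsBialgEndomorphism

theorem id : IsBialgEndomorphism (LinearMap.id : A →ₗ[R] A) where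
  map_one := rfl
  map_mul _ _ := rfl
  counit_apply _ := rfl
  comul_apply _ := by simp

theorem comp {f g : A →ₗ[R] A} (hf : IsBialgEndomorphism f) (hg : IsBialgEndomorphism g) :
    IsBialgEndomorphism (f ∘ₗ g) where
  map_one := by simp [hf.map_one, hg.map_one]
  map_mul _ _ := by simp [hf.map_mul, hg.map_mul]
  counit_apply _ := by simp [hf.counit_apply, hg.counit_apply]
  comul_apply _ := by simp [hf.comul_apply, hg.comul_apply, map_map]

theorem comp_anti {f g : A →ₗ[R] A} (hf : IsBialgEndomorphism f)
    (hg : IsBialgAntiEndomorphism g) : IsBialgAntiEndomorphism (f ∘ₗ g) where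
  map_one := by simp [hf.map_one, hg.map_one]
  map_mul _ _ := by simp [hf.map_mul, hg.map_mul]
  counit_apply _ := by simp [hf.counit_apply, hg.counit_apply]
  comul_apply _ := by simp [hf.comul_apply, hg.comul_apply, map_map]

theorem symm {e : A ≃ₗ[R] A} (he : IsBialgEndomorphism e.toLinearMap) :
    IsBialgEndomorphism e.symm.toLinearMap where
  map_one := e.symm_apply_eq.2 he.map_one.symm
  map_mul x y := e.symm_apply_eq.2 (by simpa using (he.map_mul (e.symm x) (e.symm y)).symm)
  counit_apply x := by simpa using (he.counit_apply (e.symm x)).symm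
  comul_apply x := by
    have h := he.comul_apply (e.symm x)
    simp only [LinearEquiv.coe_coe, LinearEquiv.apply_symm_apply] at h
    rw [h, map_map]
    simp

end IsBialgEndomorphism

theorem IsBialgAntiEndomorphism.comp {f g : A →ₗ[R] A} (hf : IsBialgAntiEndomorphism f)
    (hg : IsBialgAntiEndomorphism g) : IsBialgEndomorphism (f ∘ₗ g) where
  map_one := by simp [hf.map_one, hg.map_one]
  map_mul _ _ := by simp [hf.map_mul, hg.map_mul]
  counit_apply _ := by simp [hf.counit_apply, hg.counit_apply]
  comul_apply _ := by simp [hf.comul_apply, hg.comul_apply, map_map, map_comm]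

variable (R A) in
def bialgAutSubgroup : Subgroup (A ≃ₗ[R] A) where
  carrier := {e | IsBialgEndomorphism e.toLinearMap}
  mul_mem' ha hb := ha.comp hb
  one_mem' := IsBialgEndomorphism.id
  inv_mem' ha := ha.symm

theorem IsBialgAntiEndomorphism.zpow_of_odd {e : A ≃ₗ[R] A}
    (he : IsBialgAntiEndomorphism e.toLinearMap) {n : ℤ} (hn : Odd n) :
    IsBialgAntiEndomorphism (e ^ n).toLinearMap := by
  obtain ⟨k, rfl⟩ := hn
  have hsq : e ^ 2 ∈ bialgAutSubgroup R A := he.comp he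
  rw [zpow_add_one, zpow_mul, zpow_ofNat]
  exact IsBialgEndomorphism.comp_anti (zpow_mem hsq k) he

theorem isBialgAntiEndomorphism_antipode {A : Type*} [Semiring A] [HopfAlgebra R A] :
    IsBialgAntiEndomorphism (antipode R : A →ₗ[R] A) where
  map_one := antipode_one
  map_mul := antipode_mul_antidistrib
  counit_apply := counit_antipode
  comul_apply := comul_antipode

end BialgebraEndomorphism

theorem LinearEquiv.map_zpow_apply {R M N : Type*} [Semiring R] [AddCommMonoid M]
    [AddCommMonoid N] [Module R M] [Module R N] (f : M → N) {e : M ≃ₗ[R] M}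
    {e' : N ≃ₗ[R] N} (h : ∀ x, f (e x) = e' (f x)) (n : ℤ) (x : M) :
    f ((e ^ n) x) = (e' ^ n) (f x) := by
  have h_symm : ∀ x, f (e.symm x) = e'.symm (f x) := fun x =>
    e'.eq_symm_apply.2 (by rw [← h, e.apply_symm_apply])
  induction n using Int.induction_on generalizing x with
  | zero => rfl
  | succ i ih => rw [zpow_add_one, zpow_add_one, mul_apply, mul_apply, ih, h]
  | pred i ih =>
    rw [zpow_sub_one, zpow_sub_one, mul_apply, mul_apply, ih]
    exact congrArg _ (h_symm x)

theorem LinearEquiv.zpow_apply_map_zpow_neg_apply {R M N : Type*} [Semiring R]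
    [AddCommMonoid M] [AddCommMonoid N] [Module R M] [Module R N] (f : M → N) {e : M ≃ₗ[R] M}
    {e' : N ≃ₗ[R] N} (h : ∀ x, f (e x) = e' (f x)) (n : ℤ) (x : M) :
    (e' ^ n) (f ((e ^ (-n)) x)) = f x := by
  rw [map_zpow_apply f h, ← mul_apply, ← zpow_add, add_neg_cancel, zpow_zero]
  rfl

section FlipCoaction

variable {R C M : Type*} [CommSemiring R] [AddCommMonoid C] [Module R C]
  [AddCommMonoid M] [Module R M]

def flipCoaction (E : C →ₗ[R] C) (δ : M →ₗ[R] M ⊗[R] C) : M →ₗ[R] C ⊗[R] M :=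
  map E id ∘ₗ (TensorProduct.comm R M C).toLinearMap ∘ₗ δ

theorem flipCoaction_coassoc [Coalgebra R C] {E : C →ₗ[R] C}
    (hE : ∀ c, comul (R := R) (E c) = map E E (TensorProduct.comm R C C (comul c)))
    {δ : M →ₗ[R] M ⊗[R] C}
    (hδ : ∀ m, TensorProduct.assoc R M C C (map δ id (δ m)) = map id comul (δ m)) (m : M) :
    TensorProduct.assoc R C C M (map comul id (flipCoaction E δ m)) =
      map id (flipCoaction E δ) (flipCoaction E δ m) := by
  have hE' : comul ∘ₗ E = map E E ∘ₗ (TensorProduct.comm R C C).toLinearMap ∘ₗ comul :=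
    LinearMap.ext hE
  have hδ' : (TensorProduct.assoc R M C C).toLinearMap ∘ₗ map δ id ∘ₗ δ =
      map id comul ∘ₗ δ := LinearMap.ext hδ
  suffices (TensorProduct.assoc R C C M).toLinearMap ∘ₗ map comul id ∘ₗ
      flipCoaction E δ = map id (flipCoaction E δ) ∘ₗ flipCoaction E δ from congr($this m)
  calc _ = ((TensorProduct.assoc R C C M).toLinearMap ∘ₗ
        map (map E E ∘ₗ (TensorProduct.comm R C C).toLinearMap) id ∘ₗ
        (TensorProduct.comm R M (C ⊗[R] C)).toLinearMap ∘ₗ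
        (TensorProduct.assoc R M C C).toLinearMap) ∘ₗ map δ id ∘ₗ δ := by
        simp only [flipCoaction, comp_assoc, hδ', coassoc_simps, hE']
    _ = (map E (map E id ∘ₗ (TensorProduct.comm R M C).toLinearMap) ∘ₗ
      (TensorProduct.comm R (M ⊗[R] C) C).toLinearMap) ∘ₗ map δ id ∘ₗ δ := by
        refine congrArg (fun f : (M ⊗[R] C) ⊗[R] C →ₗ[R] C ⊗[R] (C ⊗[R] M) =>
          f ∘ₗ map δ id ∘ₗ δ) ?_
        ext
        simp
    _ = _ := by simp only [flipCoaction, coassoc_simps]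

theorem flipCoaction_counit [Coalgebra R C] {E : C →ₗ[R] C}
    (hE : ∀ c, counit (R := R) (E c) = counit c) {δ : M →ₗ[R] M ⊗[R] C}
    (hδ : ∀ m, TensorProduct.rid R M (map id counit (δ m)) = m)
    (m : M) : TensorProduct.lid R M (map counit id (flipCoaction E δ m)) = m := by
  have : (TensorProduct.lid R M).toLinearMap ∘ₗ map counit id ∘ₗ map E id ∘ₗ
      (TensorProduct.comm R M C).toLinearMap =
      (TensorProduct.rid R M).toLinearMap ∘ₗ map id counit := by
    ext
    simp [hE]
  exact congr($this (δ m)).trans (hδ m)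

end FlipCoaction

theorem rTensor_comul_comul_apply_of_anti {R A : Type*} [CommSemiring R] [AddCommMonoid A]
    [Module R A] [Coalgebra R A] {G : A →ₗ[R] A}
    (hG : ∀ a, comul (R := R) (G a) = map G G (TensorProduct.comm R A A (comul a))) {a : A}
    {p : ℕ} {a₁ a₂ a₃ : Fin p → A}
    (ha : map comul id (comul (R := R) a) = ∑ j, (a₁ j ⊗ₜ[R] a₂ j) ⊗ₜ[R] a₃ j) :
    map comul id (comul (R := R) (G a)) =
      ∑ j, (G (a₃ j) ⊗ₜ[R] G (a₂ j)) ⊗ₜ[R] G (a₁ j) := by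
  have hG' : comul ∘ₗ G = map G G ∘ₗ (TensorProduct.comm R A A).toLinearMap ∘ₗ comul :=
    LinearMap.ext hG
  have key : map comul id ∘ₗ comul ∘ₗ G =
      (map (map G G ∘ₗ (TensorProduct.comm R A A).toLinearMap) G ∘ₗ
        (TensorProduct.comm R A (A ⊗[R] A)).toLinearMap ∘ₗ
        (TensorProduct.assoc R A A A).toLinearMap) ∘ₗ map comul id ∘ₗ comul := by
    simp only [coassoc_simps, hG']
  simpa [ha] using congr($key a)

theorem flipCoaction_relativeYetterDrinfeld {R B C M : Type*} [CommSemiring R] [Semiring B]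
    [HopfAlgebra R B] [Semiring C] [HopfAlgebra R C] [AddCommMonoid M] [Module R M]
    {ρ : B →ₐc[R] C} {μM : M →ₗ[R] B →ₗ[R] M} {δ : M →ₗ[R] M ⊗[R] C}
    (hyd : ∀ (m : M) (b : B) (n : ℕ) (m₀ : Fin n → M) (m₁ : Fin n → C),
      δ m = ∑ i, m₀ i ⊗ₜ[R] m₁ i →
      ∀ (p : ℕ) (b₁ b₂ b₃ : Fin p → B),
        map comul id (comul (R := R) b) = ∑ j, (b₁ j ⊗ₜ[R] b₂ j) ⊗ₜ[R] b₃ j →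
        δ (μM m b) = ∑ j, ∑ i, μM (m₀ i) (b₂ j) ⊗ₜ[R]
          (antipode R (ρ (b₁ j)) * m₁ i * ρ (b₃ j)))
    {E : C →ₗ[R] C} {G : B →ₗ[R] B} (hE : ∀ x y, E (x * y) = E y * E x)
    (hES : ∀ c, E (antipode R c) = antipode R (E c))
    (hG : ∀ b, comul (R := R) (G b) = map G G (TensorProduct.comm R B B (comul b)))
    (hEρG : ∀ b, E (ρ (G b)) = ρ b) (b : B) (m : M) {p : ℕ} {b₁ b₂ b₃ : Fin p → B}
    (hb : map comul id (comul (R := R) b) = ∑ j, (b₁ j ⊗ₜ[R] b₂ j) ⊗ₜ[R] b₃ j) :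
    flipCoaction E δ (μM m (G b)) = ∑ j,
      map (mulRight R (ρ (antipode R (b₃ j))) ∘ₗ mulLeft R (ρ (b₁ j)))
        (μM.flip (G (b₂ j))) (flipCoaction E δ m) := by
  obtain ⟨n, m₀, m₁, hm⟩ := TensorProduct.exists_fin_sum_tmul (δ m)
  have hδ := hyd m (G b) n m₀ m₁ hm p _ _ _ (rTensor_comul_comul_apply_of_anti hG hb)
  have hcoeff : ∀ j i, E (antipode R (ρ (G (b₃ j))) * m₁ i * ρ (G (b₁ j))) =
      ρ (b₁ j) * E (m₁ i) * ρ (antipode R (b₃ j)) := by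
    intro j i
    rw [hE, hE, hEρG, hES, hEρG, BialgHom.map_antipode, mul_assoc]
  simp [flipCoaction, hδ, hm, hcoeff]

section

variable (k : Type*) [Field k] (B C M : Type*)
  [Ring B] [HopfAlgebra k B] [Ring C] [HopfAlgebra k C]
  [AddCommGroup M] [Module k M]

/-- **Lemma.** Let `ρ : B → C` be a morphism of Hopf algebras with bijective
antipodes, `l` an odd integer, and `M` a right relative Yetter–Drinfeld module
(right `B`-module and right `C`-comodule with
`δ(m·b) = m₍₀₎·b₍₂₎ ⊗ S(ρ(b₍₁₎)) m₍₁₎ ρ(b₍₃₎)`).  Then `b·m := m·S^{-l}(b)` and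
`δ'(m) := S^l(m₍₁₎) ⊗ m₍₀₎` make `M` a left `B`-module and a coassociative
counital left `C`-comodule satisfying the left relative Yetter–Drinfeld condition
`δ'(b·m) = ρ(b₍₁₎) m'₍₋₁₎ ρ(S(b₍₃₎)) ⊗ b₍₂₎·m'₍₀₎`. -/
theorem right_to_left_relative_yetter_drinfeld
    (eB : B ≃ₗ[k] B) (heB : ∀ b : B, eB b = HopfAlgebra.antipode (R := k) b)
    (eC : C ≃ₗ[k] C) (heC : ∀ c : C, eC c = HopfAlgebra.antipode (R := k) c)
    (ρ : B →ₐc[k] C) (l : ℤ) (hl : Odd l)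
    (μM : M →ₗ[k] B →ₗ[k] M) (δ : M →ₗ[k] M ⊗[k] C)
    -- `μM` is a right module structure
    (hμ₁ : ∀ m : M, μM m 1 = m)
    (hμmul : ∀ (m : M) (b b' : B), μM m (b * b') = μM (μM m b) b')
    -- `δ` is a coassociative counital right comodule structure
    (hδcoassoc : ∀ m : M,
      (TensorProduct.assoc k M C C) ((TensorProduct.map δ LinearMap.id) (δ m)) =
        (TensorProduct.map LinearMap.id (Coalgebra.comul (R := k))) (δ m))
    (hδcounit : ∀ m : M,
      (TensorProduct.rid k M)
          ((TensorProduct.map LinearMap.id (Coalgebra.counit (R := k))) (δ m)) = m)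
    -- the right relative Yetter–Drinfeld condition
    (hyd : ∀ (m : M) (b : B) (n : ℕ) (m₀ : Fin n → M) (m₁ : Fin n → C),
      δ m = ∑ i, m₀ i ⊗ₜ[k] m₁ i →
      ∀ (p : ℕ) (b₁ b₂ b₃ : Fin p → B),
        (TensorProduct.map (Coalgebra.comul (R := k)) LinearMap.id)
            (Coalgebra.comul (R := k) b) = ∑ j, (b₁ j ⊗ₜ[k] b₂ j) ⊗ₜ[k] b₃ j →
        δ (μM m b) = ∑ j, ∑ i, μM (m₀ i) (b₂ j) ⊗ₜ[k]
          (HopfAlgebra.antipode (R := k) (ρ (b₁ j)) * m₁ i * ρ (b₃ j))) :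
    -- `b·m = m·S^{-l}(b)` is a left module structure
    (∀ m : M, SlAct k B M eB l μM 1 m = m) ∧
    (∀ (b b' : B) (m : M),
      SlAct k B M eB l μM (b * b') m = SlAct k B M eB l μM b (SlAct k B M eB l μM b' m)) ∧
    -- `δ'` is a coassociative counital left comodule structure
    (∀ m : M,
      (TensorProduct.assoc k C C M)
          ((TensorProduct.map (Coalgebra.comul (R := k)) LinearMap.id)
            (SlCoact k C M eC l δ m)) =
        (TensorProduct.map LinearMap.id (SlCoact k C M eC l δ)) (SlCoact k C M eC l δ m)) ∧
    (∀ m : M,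
      (TensorProduct.lid k M)
          ((TensorProduct.map (Coalgebra.counit (R := k)) LinearMap.id)
            (SlCoact k C M eC l δ m)) = m) ∧
    -- the left relative Yetter–Drinfeld condition
    (∀ (b : B) (m : M) (p : ℕ) (b₁ b₂ b₃ : Fin p → B),
      (TensorProduct.map (Coalgebra.comul (R := k)) LinearMap.id)
          (Coalgebra.comul (R := k) b) = ∑ j, (b₁ j ⊗ₜ[k] b₂ j) ⊗ₜ[k] b₃ j →
      ∀ (n : ℕ) (c : Fin n → C) (w : Fin n → M),
        SlCoact k C M eC l δ m = ∑ i, c i ⊗ₜ[k] w i →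
        SlCoact k C M eC l δ (SlAct k B M eB l μM b m) = ∑ j, ∑ i,
          (ρ (b₁ j) * c i * ρ (HopfAlgebra.antipode (R := k) (b₃ j))) ⊗ₜ[k]
            SlAct k B M eB l μM (b₂ j) (w i)) := by
  have hSB : IsBialgAntiEndomorphism eB.toLinearMap :=
    (LinearMap.ext heB : eB.toLinearMap = antipode k) ▸ isBialgAntiEndomorphism_antipode
  have hSC : IsBialgAntiEndomorphism eC.toLinearMap :=
    (LinearMap.ext heC : eC.toLinearMap = antipode k) ▸ isBialgAntiEndomorphism_antipode
  have hG := hSB.zpow_of_odd hl.neg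
  have hE := hSC.zpow_of_odd hl
  have hρ (b : B) : ρ (eB b) = eC (ρ b) := by rw [heB, heC, BialgHom.map_antipode]
  have hES (c : C) : (eC ^ l) (antipode k c) = antipode k ((eC ^ l) c) := by
    rw [← heC, ← heC, LinearEquiv.map_zpow_apply eC (fun _ => rfl)]
  refine ⟨fun m => (congrArg (μM m) hG.map_one).trans (hμ₁ m),
    fun b b' m => (congrArg (μM m) (hG.map_mul b b')).trans (hμmul m _ _),
    flipCoaction_coassoc hE.comul_apply hδcoassoc, flipCoaction_counit hE.counit_apply hδcounit,
    fun b m p b₁ b₂ b₃ hb n c w hc => ?_⟩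
  have hc' : flipCoaction (eC ^ l).toLinearMap δ m = ∑ i, c i ⊗ₜ[k] w i := hc
  change flipCoaction (eC ^ l).toLinearMap δ (μM m ((eB ^ (-l)).toLinearMap b)) = _
  rw [flipCoaction_relativeYetterDrinfeld hyd hE.map_mul hES hG.comul_apply
    (LinearEquiv.zpow_apply_map_zpow_neg_apply ρ hρ l) b m hb, hc']
  simp [SlAct]

end
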